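/- For every w ∈ S_n and every pair (i,j) in the essential set Ess(w), the unique element of BM(w) whose unique right descent is i and whose unique left descent is j equals the bigrassmannian permutation b(j, i, t_w(i,j) − 1), where t_w is the co-rank function of w. -/

import Mathlib

namespace Paper

/-- The simple transposition `s_i = (i, i+1)` (1-based) in `S_n`, realized as a
permutation of `Fin n`. For `i` outside `{1, …, n-1}` we set `s i = 1`. -/
def s (n i : ℕ) : Equiv.Perm (Fin n) :=
  if h : 1 ≤ i ∧ i < n then Equiv.swap ⟨i - 1, by omega⟩ ⟨i, by omega⟩ else 1

/-- The length of a permutation: its number of inversions. -/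
def len {n : ℕ} (w : Equiv.Perm (Fin n)) : ℕ :=
  (Finset.univ.filter (fun p : Fin n × Fin n => p.1 < p.2 ∧ w p.2 < w p.1)).card

/-- `i` is a left descent of `w` if `1 ≤ i ≤ n-1` and `ℓ(s_i w) < ℓ(w)`. -/
def IsLeftDescent {n : ℕ} (w : Equiv.Perm (Fin n)) (i : ℕ) : Prop :=
  1 ≤ i ∧ i ≤ n - 1 ∧ len (s n i * w) < len w

/-- `i` is a right descent of `w` if `1 ≤ i ≤ n-1` and `ℓ(w s_i) < ℓ(w)`. -/
def IsRightDescent {n : ℕ} (w : Equiv.Perm (Fin n)) (i : ℕ) : Prop :=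
  1 ≤ i ∧ i ≤ n - 1 ∧ len (w * s n i) < len w

/-- A permutation is bigrassmannian if it has exactly one left descent and
exactly one right descent. -/
def Bigrassmannian {n : ℕ} (w : Equiv.Perm (Fin n)) : Prop :=
  (∃! i, IsLeftDescent w i) ∧ (∃! j, IsRightDescent w j)

/-- One step of the Bruhat order: `w ⋖ t * w` for a transposition `t`
with `ℓ(w) < ℓ(t w)`. -/
def BruhatStep {n : ℕ} (w w' : Equiv.Perm (Fin n)) : Prop :=
  ∃ a b : Fin n, a ≠ b ∧ w' = Equiv.swap a b * w ∧ len w < len w'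

/-- The Bruhat order on `S_n`: the partial order generated by `w < tw` whenever
`t` is a transposition and `ℓ(w) < ℓ(tw)`. -/
def BruhatLE {n : ℕ} : Equiv.Perm (Fin n) → Equiv.Perm (Fin n) → Prop :=
  Relation.ReflTransGen BruhatStep

/-- Strict Bruhat order. -/
def BruhatLT {n : ℕ} (x y : Equiv.Perm (Fin n)) : Prop :=
  BruhatLE x y ∧ x ≠ y

/-- The product `s_a s_{a+1} ⋯ s_b` of consecutive simple transpositions. -/
def ascRun (n a b : ℕ) : Equiv.Perm (Fin n) :=
  ((List.range (b + 1 - a)).map (fun t => s n (a + t))).prod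

/-- For `i ≤ j`: `b(i,j,k) = (s_i ⋯ s_{j+k})(s_{i-1} ⋯ s_{j+k-1}) ⋯ (s_{i-k} ⋯ s_j)`. -/
def bAux (n i j k : ℕ) : Equiv.Perm (Fin n) :=
  ((List.range (k + 1)).map (fun m => ascRun n (i - m) (j + k - m))).prod

/-- The bigrassmannian permutation `b(i,j,k)`; for `j < i` it is `b(j,i,k)⁻¹`. -/
def b (n i j k : ℕ) : Equiv.Perm (Fin n) :=
  if i ≤ j then bAux n i j k else (bAux n j i k)⁻¹

/-- The value `w(i)` of a permutation `w ∈ S_n` at `i ∈ {1, …, n}`, 1-based. -/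
def act {n : ℕ} (w : Equiv.Perm (Fin n)) (i : ℕ) : ℕ :=
  if h : 1 ≤ i ∧ i ≤ n then ((w ⟨i - 1, by omega⟩ : Fin n) : ℕ) + 1 else i

/-- The essential set of a permutation `w ∈ S_n`. -/
def Ess {n : ℕ} (w : Equiv.Perm (Fin n)) : Set (ℕ × ℕ) :=
  {p | 1 ≤ p.1 ∧ p.1 ≤ n - 1 ∧ 1 ≤ p.2 ∧ p.2 ≤ n - 1 ∧
    p.1 < act w⁻¹ p.2 ∧ p.2 < act w p.1 ∧
    act w (p.1 + 1) ≤ p.2 ∧ act w⁻¹ (p.2 + 1) ≤ p.1}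

/-- The rank function `r_w(i,j) = |{k ≤ i : w(k) ≤ j}|` (1-based). -/
def rnk {n : ℕ} (w : Equiv.Perm (Fin n)) (i j : ℕ) : ℕ :=
  ((Finset.Icc 1 i).filter (fun k => act w k ≤ j)).card

/-- The co-rank function `t_w(i,j) = min{i,j} - r_w(i,j)`. -/
def cork {n : ℕ} (w : Equiv.Perm (Fin n)) (i j : ℕ) : ℕ :=
  min i j - rnk w i j

/-- The set of bigrassmannian permutations `y ≤ w` in Bruhat order. -/
def BSet {n : ℕ} (w : Equiv.Perm (Fin n)) : Set (Equiv.Perm (Fin n)) :=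
  {y | Bigrassmannian y ∧ BruhatLE y w}

/-- The set of Bruhat-maximal elements of `BSet w`. -/
def BM {n : ℕ} (w : Equiv.Perm (Fin n)) : Set (Equiv.Perm (Fin n)) :=
  {y ∈ BSet w | ∀ z ∈ BSet w, BruhatLE y z → z = y}

/-!
Bruhat order is read off rank matrices: `x ≤ w` iff `rnk w ≤ rnk x` entrywise. A Bruhat step
`x < x * (P Q)` lowers the rank by one on a rectangle; conversely, if `rnk w ≤ rnk x` and
`x ≠ w`, raising the value of `x` at its first disagreement with `w` to the next admissible value
is a Bruhat step that keeps `rnk w ≤ rnk x`.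

A bigrassmannian permutation with descents `(i, j)` is determined by its rank `r` at `(i, j)`: it
is the block permutation `blockFun i j r`, whose rank matrix is
`min (min p q) (r + (p - i) + (q - j))`. So it lies below `w` iff `rnk w i j ≤ r`, and the largest
such one is `b(j, i, t_w(i, j) - 1)`, with `r = rnk w i j`. When `(i, j)` is essential, the rank
of `w` at `(i, j)` is strictly smaller than `rnk w p q + (i - p) + (j - q)` for every other box,
which rules out a bigrassmannian element with other descents lying above this one and below `w`.
-/

open Finset Equiv

lemma _root_.StrictMonoOn.apply_add_sub_le {f : ℕ → ℕ} {a b : ℕ}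
    (hf : StrictMonoOn f (Set.Icc a b)) {k : ℕ} (hak : a ≤ k) (hkb : k ≤ b) :
    f a + (k - a) ≤ f k := by
  induction k, hak using Nat.le_induction with
  | base => simp
  | succ k hak ih =>
    have := hf ⟨hak, by omega⟩ ⟨by omega, hkb⟩ (Nat.lt_succ_self k)
    have := ih (by omega)
    omega

lemma _root_.MonotoneOn.apply_le_iff_le_card_filter {f : ℕ → ℕ} {b c p : ℕ}
    (hf : MonotoneOn f (Set.Icc 1 b)) (hp1 : 1 ≤ p) (hpb : p ≤ b) :
    f p ≤ c ↔ p ≤ #{k ∈ Icc 1 b | f k ≤ c} := by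
  constructor
  · intro hfp
    calc p = #(Icc 1 p) := by simp
      _ ≤ _ := Finset.card_le_card fun k hk => by
        simp only [Finset.mem_Icc, Finset.mem_filter] at hk ⊢
        exact ⟨⟨hk.1, hk.2.trans hpb⟩, (hf ⟨hk.1, by omega⟩ ⟨hp1, hpb⟩ hk.2).trans hfp⟩
  · intro hle
    by_contra! hfp
    have : #{k ∈ Icc 1 b | f k ≤ c} ≤ #(Icc 1 (p - 1)) := Finset.card_le_card fun k hk => by
      simp only [Finset.mem_Icc, Finset.mem_filter] at hk ⊢
      refine ⟨hk.1.1, ?_⟩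
      by_contra! hkp
      exact (hfp.trans_le (hf ⟨hp1, hpb⟩ hk.1 (by omega))).not_ge hk.2
    rw [Nat.card_Icc] at this
    omega

variable {n : ℕ}

lemma act_of_mem (w : Perm (Fin n)) {p : ℕ} (h1 : 1 ≤ p) (h2 : p ≤ n) :
    act w p = (w ⟨p - 1, by omega⟩ : ℕ) + 1 :=
  dif_pos ⟨h1, h2⟩

lemma act_of_not_mem (w : Perm (Fin n)) {p : ℕ} (h : ¬(1 ≤ p ∧ p ≤ n)) : act w p = p :=
  dif_neg h

lemma act_val_add_one (w : Perm (Fin n)) (P : Fin n) : act w ((P : ℕ) + 1) = (w P : ℕ) + 1 := by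
  rw [act_of_mem w (by omega) (by omega)]
  rfl

lemma one_le_act (w : Perm (Fin n)) {p : ℕ} (h : 1 ≤ p) : 1 ≤ act w p := by
  unfold act; split_ifs <;> omega

lemma act_le (w : Perm (Fin n)) {p : ℕ} (h1 : 1 ≤ p) (h2 : p ≤ n) : act w p ≤ n := by
  rw [act_of_mem w h1 h2]
  exact (w _).isLt

lemma act_one (p : ℕ) : act (1 : Perm (Fin n)) p = p := by
  unfold act; split_ifs <;> simp only [Perm.one_apply]; omega

lemma act_mul (u v : Perm (Fin n)) (p : ℕ) : act (u * v) p = act u (act v p) := by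
  by_cases h : 1 ≤ p ∧ p ≤ n
  · obtain ⟨P, rfl⟩ : ∃ P : Fin n, p = P + 1 := ⟨⟨p - 1, by omega⟩, (Nat.sub_add_cancel h.1).symm⟩
    rw [act_val_add_one, act_val_add_one, act_val_add_one, Perm.mul_apply]
  · rw [act_of_not_mem _ h, act_of_not_mem v h, act_of_not_mem u h]

lemma act_inv_act (w : Perm (Fin n)) (p : ℕ) : act w⁻¹ (act w p) = p := by
  rw [← act_mul, inv_mul_cancel, act_one]

lemma act_act_inv (w : Perm (Fin n)) (v : ℕ) : act w (act w⁻¹ v) = v := by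
  simpa using act_inv_act w⁻¹ v

lemma act_injective (w : Perm (Fin n)) : Function.Injective (act w) :=
  Function.LeftInverse.injective (act_inv_act w)

lemma act_eq_iff_eq_act_inv (w : Perm (Fin n)) {p v : ℕ} : act w p = v ↔ p = act w⁻¹ v :=
  ⟨fun h => h ▸ (act_inv_act w p).symm, fun h => h ▸ act_act_inv w v⟩

lemma eq_of_act_eq {x w : Perm (Fin n)} (h : ∀ p, 1 ≤ p → p ≤ n → act x p = act w p) :
    x = w := by
  ext P
  simpa [act_val_add_one] using h (P + 1) (by omega) (by omega)

lemma act_swap (P Q : Fin n) (p : ℕ) :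
    act (swap P Q) p =
      if p = (P : ℕ) + 1 then (Q : ℕ) + 1 else if p = (Q : ℕ) + 1 then (P : ℕ) + 1 else p := by
  by_cases h : 1 ≤ p ∧ p ≤ n
  · obtain ⟨R, rfl⟩ : ∃ R : Fin n, p = R + 1 := ⟨⟨p - 1, by omega⟩, (Nat.sub_add_cancel h.1).symm⟩
    rw [act_val_add_one, swap_apply_def]
    split_ifs <;> simp_all [Fin.ext_iff]
  · rw [act_of_not_mem _ h]
    split_ifs <;> omega

lemma s_eq_swap {m : ℕ} (h1 : 1 ≤ m) (h2 : m < n) :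
    s n m = swap (⟨m - 1, by omega⟩ : Fin n) ⟨m, h2⟩ :=
  dif_pos ⟨h1, h2⟩

lemma s_inv (m : ℕ) : (s n m)⁻¹ = s n m := by
  unfold s; split_ifs <;> simp

lemma act_s {m : ℕ} (h1 : 1 ≤ m) (h2 : m < n) (p : ℕ) :
    act (s n m) p = if p = m then m + 1 else if p = m + 1 then m else p := by
  rw [s_eq_swap h1 h2, act_swap, Fin.val_mk, Fin.val_mk]
  split_ifs <;> omega

def inversions (x : Perm (Fin n)) : Finset (Fin n × Fin n) :=
  {a | a.1 < a.2 ∧ x a.2 < x a.1}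

lemma len_eq_card_inversions (x : Perm (Fin n)) : len x = #(inversions x) := rfl

lemma mem_inversions {x : Perm (Fin n)} {a : Fin n × Fin n} :
    a ∈ inversions x ↔ a.1 < a.2 ∧ x a.2 < x a.1 := by
  simp [inversions]

lemma len_inv (w : Perm (Fin n)) : len w⁻¹ = len w := by
  refine Finset.card_nbij' (fun a => (w⁻¹ a.2, w⁻¹ a.1)) (fun a => (w a.2, w a.1)) ?_ ?_ ?_ ?_ <;>
    intro a <;> simp_all

lemma len_lt_len_mul_swap (x : Perm (Fin n)) {p q : Fin n} (hpq : p < q) (hx : x p < x q) :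
    len x < len (x * swap p q) := by
  set τ := swap p q
  let between : Fin n → Prop := fun t => p < t ∧ t < q
  have hτ_between : ∀ t, between t → τ t = t := fun t ht =>
    swap_apply_of_ne_of_ne (ne_of_gt ht.1) (ne_of_lt ht.2)
  have hbetween_τ : ∀ t, between (τ t) ↔ between t := by
    intro t
    by_cases ht : between t
    · rw [hτ_between t ht]
    · simp only [τ, swap_apply_def]; split_ifs <;> simp_all [between]
  -- an involution sending the inversions of `x` to inversions of `x * τ` other than `(p, q)`
  let f : Fin n × Fin n → Fin n × Fin n := fun a =>
    if between a.1 ∨ between a.2 then a else (τ a.1, τ a.2)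
  have hf : Function.Involutive f := by
    rintro ⟨u, v⟩
    by_cases h : between u ∨ between v
    · simp [f, h]
    · simp [f, h, hbetween_τ, τ]
  have hmaps : ∀ a ∈ inversions x, f a ∈ (inversions (x * τ)).erase (p, q) := by
    rintro ⟨u, v⟩ huv
    rw [mem_inversions] at huv
    rw [Finset.mem_erase, mem_inversions]
    by_cases h : between u ∨ between v
    · simp only [f, if_pos h, Perm.mul_apply, between, τ, swap_apply_def] at h ⊢
      split_ifs <;> subst_vars <;>
        simp only [Fin.lt_def, ne_eq, Prod.ext_iff, Fin.ext_iff] at * <;> omega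
    · simp only [f, if_neg h, Perm.mul_apply, τ, swap_apply_self]
      simp only [between, swap_apply_def] at h ⊢
      split_ifs <;> subst_vars <;>
        simp only [Fin.lt_def, ne_eq, Prod.ext_iff, Fin.ext_iff] at * <;> omega
  have hpq_mem : (p, q) ∈ inversions (x * τ) :=
    mem_inversions.mpr ⟨hpq, by simpa [τ] using hx⟩
  have hle := Finset.card_le_card_of_injOn f hmaps hf.injective.injOn
  rw [Finset.card_erase_of_mem hpq_mem] at hle
  have := Finset.card_pos.mpr ⟨_, hpq_mem⟩
  rw [len_eq_card_inversions, len_eq_card_inversions]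
  omega

lemma len_mul_swap_lt (x : Perm (Fin n)) {p q : Fin n} (hpq : p < q) (hx : x q < x p) :
    len (x * swap p q) < len x := by
  simpa [mul_assoc] using len_lt_len_mul_swap (x * swap p q) hpq (by simpa using hx)

lemma len_lt_len_mul_swap_iff (x : Perm (Fin n)) {p q : Fin n} (hpq : p < q) :
    len x < len (x * swap p q) ↔ x p < x q := by
  refine ⟨fun h => ?_, len_lt_len_mul_swap x hpq⟩
  by_contra! hle
  exact lt_asymm h (len_mul_swap_lt x hpq (hle.lt_of_ne (x.injective.ne hpq.ne')))

lemma len_mul_swap_lt_iff (x : Perm (Fin n)) {p q : Fin n} (hpq : p < q) :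
    len (x * swap p q) < len x ↔ x q < x p := by
  simpa [mul_assoc] using len_lt_len_mul_swap_iff (x * swap p q) hpq

lemma len_mul_s_lt_iff (w : Perm (Fin n)) {m : ℕ} (h1 : 1 ≤ m) (hm : m < n) :
    len (w * s n m) < len w ↔ act w (m + 1) < act w m := by
  have hPQ : (⟨m - 1, by omega⟩ : Fin n) < ⟨m, hm⟩ := Fin.mk_lt_mk.mpr (by omega)
  have hQ : act w (m + 1) = w ⟨m, hm⟩ + 1 := act_val_add_one w ⟨m, hm⟩
  rw [s_eq_swap h1 hm, act_of_mem w h1 hm.le, hQ, add_lt_add_iff_right, ← Fin.lt_def,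
    len_mul_swap_lt_iff w hPQ]

lemma isRightDescent_iff (w : Perm (Fin n)) (m : ℕ) :
    IsRightDescent w m ↔ 1 ≤ m ∧ m ≤ n - 1 ∧ act w (m + 1) < act w m := by
  unfold IsRightDescent
  constructor <;> rintro ⟨h1, h2, h⟩
  · exact ⟨h1, h2, (len_mul_s_lt_iff w h1 (by omega)).mp h⟩
  · exact ⟨h1, h2, (len_mul_s_lt_iff w h1 (by omega)).mpr h⟩

lemma isLeftDescent_iff_isRightDescent_inv (w : Perm (Fin n)) (m : ℕ) :
    IsLeftDescent w m ↔ IsRightDescent w⁻¹ m := by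
  unfold IsLeftDescent IsRightDescent
  rw [← len_inv (s n m * w), mul_inv_rev, s_inv, len_inv]

lemma isLeftDescent_iff (w : Perm (Fin n)) (m : ℕ) :
    IsLeftDescent w m ↔ 1 ≤ m ∧ m ≤ n - 1 ∧ act w⁻¹ (m + 1) < act w⁻¹ m := by
  rw [isLeftDescent_iff_isRightDescent_inv, isRightDescent_iff]

lemma swap_apply_mul (x : Perm (Fin n)) (P Q : Fin n) : swap (x P) (x Q) * x = x * swap P Q := by
  rw [swap_apply_apply, inv_mul_cancel_right]

lemma bruhatStep_mul_swap (x : Perm (Fin n)) {P Q : Fin n} (hPQ : P < Q) (hx : x P < x Q) :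
    BruhatStep x (x * swap P Q) :=
  ⟨x P, x Q, x.injective.ne hPQ.ne, (swap_apply_mul x P Q).symm, len_lt_len_mul_swap x hPQ hx⟩

lemma BruhatStep.exists_mul_swap {x y : Perm (Fin n)} (h : BruhatStep x y) :
    ∃ P Q : Fin n, P < Q ∧ x P < x Q ∧ y = x * swap P Q := by
  obtain ⟨a, c, hac, rfl, hlen⟩ := h
  obtain ⟨P, rfl⟩ := x.surjective a
  obtain ⟨Q, rfl⟩ := x.surjective c
  rw [swap_apply_mul] at hlen ⊢
  rcases (x.injective.ne_iff.mp hac).lt_or_gt with hPQ | hPQ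
  · exact ⟨P, Q, hPQ, (len_lt_len_mul_swap_iff x hPQ).mp hlen, rfl⟩
  · rw [swap_comm] at hlen ⊢
    exact ⟨Q, P, hPQ, (len_lt_len_mul_swap_iff x hPQ).mp hlen, rfl⟩

lemma rnk_zero_left (w : Perm (Fin n)) (q : ℕ) : rnk w 0 q = 0 := by
  simp [rnk]

lemma rnk_succ_left (w : Perm (Fin n)) (p q : ℕ) :
    rnk w (p + 1) q = rnk w p q + if act w (p + 1) ≤ q then 1 else 0 := by
  unfold rnk
  rw [← Finset.insert_Icc_right_eq_Icc_add_one (by omega), Finset.filter_insert]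
  split_ifs
  · rw [Finset.card_insert_of_notMem (by simp)]
  · rfl

lemma rnk_inv (w : Perm (Fin n)) (p q : ℕ) : rnk w⁻¹ q p = rnk w p q := by
  refine Finset.card_nbij' (act w⁻¹) (act w) ?_ ?_ ?_ ?_ <;> intro k hk <;>
    simp only [Finset.coe_filter, Finset.mem_Icc, Set.mem_ofPred_eq] at hk ⊢
  · exact ⟨⟨one_le_act _ hk.1.1, hk.2⟩, by rw [act_act_inv]; exact hk.1.2⟩
  · exact ⟨⟨one_le_act _ hk.1.1, hk.2⟩, by rw [act_inv_act]; exact hk.1.2⟩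
  · exact act_act_inv w k
  · exact act_inv_act w k

lemma rnk_succ_right (w : Perm (Fin n)) (p q : ℕ) :
    rnk w p (q + 1) = rnk w p q + if act w⁻¹ (q + 1) ≤ p then 1 else 0 := by
  rw [← rnk_inv, rnk_succ_left, rnk_inv]

lemma rnk_le_left (w : Perm (Fin n)) (p q : ℕ) : rnk w p q ≤ p :=
  (Finset.card_filter_le _ _).trans (by simp)

lemma rnk_le_right (w : Perm (Fin n)) (p q : ℕ) : rnk w p q ≤ q :=
  rnk_inv w p q ▸ rnk_le_left w⁻¹ q p

lemma rnk_mono_left (w : Perm (Fin n)) {p p' : ℕ} (q : ℕ) (h : p' ≤ p) :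
    rnk w p' q ≤ rnk w p q :=
  Finset.card_le_card (Finset.filter_subset_filter _ (Finset.Icc_subset_Icc le_rfl h))

lemma rnk_mono_right (w : Perm (Fin n)) (p : ℕ) {q q' : ℕ} (h : q' ≤ q) :
    rnk w p q' ≤ rnk w p q := by
  rw [← rnk_inv w p q, ← rnk_inv w p q']
  exact rnk_mono_left w⁻¹ p h

lemma rnk_le_rnk_add_left (w : Perm (Fin n)) (p p' q : ℕ) :
    rnk w p q ≤ rnk w p' q + (p - p') := by
  induction p with
  | zero => simp [rnk_zero_left]
  | succ p ih =>
    rcases Nat.lt_or_ge p p' with h | h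
    · have := rnk_mono_left w q (show p + 1 ≤ p' by omega); omega
    · rw [rnk_succ_left]; split_ifs <;> omega

lemma rnk_le_rnk_add_right (w : Perm (Fin n)) (p q q' : ℕ) :
    rnk w p q ≤ rnk w p q' + (q - q') := by
  rw [← rnk_inv w p q, ← rnk_inv w p q']
  exact rnk_le_rnk_add_left w⁻¹ q q' p

lemma rnk_of_le_right (w : Perm (Fin n)) {p q : ℕ} (hp : p ≤ n) (hq : n ≤ q) : rnk w p q = p := by
  rw [rnk, Finset.filter_true_of_mem fun k hk => ?_, Nat.card_Icc, Nat.add_sub_cancel]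
  rw [Finset.mem_Icc] at hk
  exact (act_le w hk.1 (hk.2.trans hp)).trans hq

lemma add_le_add_rnk (w : Perm (Fin n)) {p q : ℕ} (hp : p ≤ n) (hq : q ≤ n) :
    p + q ≤ n + rnk w p q := by
  have := rnk_le_rnk_add_right w p n q
  rw [rnk_of_le_right w hp le_rfl] at this
  omega

lemma rnk_congr {x w : Perm (Fin n)} {p : ℕ} (q : ℕ)
    (h : ∀ k, 1 ≤ k → k ≤ p → act x k = act w k) : rnk x p q = rnk w p q := by
  unfold rnk
  congr 1
  refine Finset.filter_congr fun k hk => ?_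
  rw [Finset.mem_Icc] at hk
  rw [h k hk.1 hk.2]

lemma rnk_eq_rnk_add_card (w : Perm (Fin n)) (p : ℕ) {q c : ℕ} (h : q ≤ c) :
    rnk w p c = rnk w p q + #{k ∈ Icc 1 p | q < act w k ∧ act w k ≤ c} := by
  unfold rnk
  rw [← Finset.card_union_of_disjoint (Finset.disjoint_filter.mpr fun _ _ h₁ h₂ => by omega),
    ← Finset.filter_or]
  congr 1
  exact Finset.filter_congr fun k _ => by omega

lemma rnk_mul_swap_add (x : Perm (Fin n)) {P Q : Fin n} (hPQ : P < Q) (hx : x P < x Q) (p q : ℕ) :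
    rnk (x * swap P Q) p q +
        (if (P : ℕ) < p ∧ p ≤ Q ∧ (x P : ℕ) < q ∧ q ≤ x Q then 1 else 0) = rnk x p q := by
  have hP := act_val_add_one x P
  have hQ := act_val_add_one x Q
  rw [Fin.lt_def] at hPQ hx
  induction p with
  | zero => simp [rnk_zero_left]
  | succ p ih =>
    rw [rnk_succ_left, rnk_succ_left, act_mul, act_swap]
    split_ifs at ih ⊢ <;> simp_all <;> omega

lemma rnk_mul_swap_le (x : Perm (Fin n)) {P Q : Fin n} (hPQ : P < Q) (hx : x P < x Q) (p q : ℕ) :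
    rnk (x * swap P Q) p q ≤ rnk x p q :=
  (Nat.le_add_right _ _).trans (rnk_mul_swap_add x hPQ hx p q).le

lemma rnk_le_of_bruhatLE {x w : Perm (Fin n)} (h : BruhatLE x w) (p q : ℕ) :
    rnk w p q ≤ rnk x p q := by
  induction h with
  | refl => exact le_rfl
  | tail _ hstep ih =>
    obtain ⟨P, Q, hPQ, hx, rfl⟩ := hstep.exists_mul_swap
    exact (rnk_mul_swap_le _ hPQ hx p q).trans ih

def rankSum (x : Perm (Fin n)) : ℕ :=
  ∑ pq ∈ range (n + 1) ×ˢ range (n + 1), rnk x pq.1 pq.2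

lemma rankSum_mul_swap_lt (x : Perm (Fin n)) {P Q : Fin n} (hPQ : P < Q) (hx : x P < x Q) :
    rankSum (x * swap P Q) < rankSum x := by
  refine Finset.sum_lt_sum (fun pq _ => rnk_mul_swap_le x hPQ hx _ _)
    ⟨((P : ℕ) + 1, (x P : ℕ) + 1), by simp only [Finset.mem_product, Finset.mem_range]; omega, ?_⟩
  dsimp only
  have := rnk_mul_swap_add x hPQ hx (P + 1) (x P + 1)
  rw [if_pos (by rw [Fin.lt_def] at hPQ hx; omega)] at this
  omega

section RankCriterion

variable {x w : Perm (Fin n)}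

lemma act_lt_act_of_rnk_le (hrnk : ∀ p q, p ≤ n → q ≤ n → rnk w p q ≤ rnk x p q) {i : ℕ}
    (hi : 1 ≤ i) (hin : i ≤ n) (hagree : ∀ k < i, act x k = act w k)
    (hne : act x i ≠ act w i) : act x i < act w i := by
  by_contra! hle
  have hlt := hle.lt_of_ne' hne
  set q := act x i - 1
  have hx := rnk_succ_left x (i - 1) q
  have hw := rnk_succ_left w (i - 1) q
  rw [Nat.sub_add_cancel hi] at hx hw
  rw [if_neg (by omega)] at hx
  rw [if_pos (by omega)] at hw
  have := rnk_congr (p := i - 1) q fun k _ hk => hagree k (by omega)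
  have := hrnk i q hin (by have := act_le x hi hin; omega)
  omega

/-- On the rectangle where swapping the first position `i` at which `x` and `w` differ with the
next position carrying a value in `(act x i, act w i]` lowers `rnk x`, it exceeds `rnk w`. -/
lemma rnk_add_one_le_of_first_difference (hrnk : ∀ p q, p ≤ n → q ≤ n → rnk w p q ≤ rnk x p q)
    {i p q : ℕ} (hi : 1 ≤ i) (hip : i ≤ p) (hpn : p ≤ n)
    (hagree : ∀ k < i, act x k = act w k) (hq : act x i ≤ q) (hqc : q < act w i)
    (hgap : ∀ k, i < k → k ≤ p → ¬(act x i < act x k ∧ act x k ≤ act w i)) :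
    rnk w p q + 1 ≤ rnk x p q := by
  set c := act w i
  have hsub : {k ∈ Icc 1 p | q < act x k ∧ act x k ≤ c} ⊆
      {k ∈ Icc 1 p | q < act w k ∧ act w k ≤ c}.erase i := by
    intro k hk
    simp only [Finset.mem_filter, Finset.mem_Icc, Finset.mem_erase] at hk ⊢
    have hki : k < i := by
      by_contra! hik
      rcases hik.eq_or_lt with rfl | hik
      · omega
      · exact hgap k hik hk.1.2 ⟨by omega, hk.2.2⟩
    rw [← hagree k hki]
    exact ⟨hki.ne, hk⟩
  have hi_mem : i ∈ {k ∈ Icc 1 p | q < act w k ∧ act w k ≤ c} := by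
    simp only [Finset.mem_filter, Finset.mem_Icc]; omega
  have hcard := Finset.card_le_card hsub
  rw [Finset.card_erase_of_mem hi_mem] at hcard
  have := Finset.card_pos.mpr ⟨i, hi_mem⟩
  have := rnk_eq_rnk_add_card x p hqc.le
  have := rnk_eq_rnk_add_card w p hqc.le
  have := hrnk p c hpn (act_le w hi (hip.trans hpn))
  omega

lemma exists_first_difference (hxw : x ≠ w) :
    ∃ i, 1 ≤ i ∧ i ≤ n ∧ act x i ≠ act w i ∧ ∀ k < i, act x k = act w k := by
  have hdiff : ∃ i, act x i ≠ act w i := by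
    by_contra! h
    exact hxw (eq_of_act_eq fun p _ _ => h p)
  classical
  refine ⟨Nat.find hdiff, ?_, ?_, Nat.find_spec hdiff,
    fun k hk => not_not.mp (Nat.find_min hdiff hk)⟩ <;>
  · by_contra h
    exact Nat.find_spec hdiff (by rw [act_of_not_mem x (by omega), act_of_not_mem w (by omega)])

lemma exists_next_value {i : ℕ} (hi : 1 ≤ i) (hin : i ≤ n) (hagree : ∀ k < i, act x k = act w k)
    (hlt : act x i < act w i) :
    ∃ k, i < k ∧ k ≤ n ∧ act x i < act x k ∧ act x k ≤ act w i ∧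
      ∀ k', i < k' → k' < k → ¬(act x i < act x k' ∧ act x k' ≤ act w i) := by
  have hnext : ∃ k, i < k ∧ act x i < act x k ∧ act x k ≤ act w i := by
    refine ⟨act x⁻¹ (act w i), ?_, by rw [act_act_inv]; exact hlt, by rw [act_act_inv]⟩
    by_contra! hle
    rcases hle.eq_or_lt with heq | hlt'
    · have := act_act_inv x (act w i); rw [heq] at this; omega
    · have := hagree _ hlt'
      rw [act_act_inv] at this
      exact hlt'.ne (act_injective w this).symm
  classical
  obtain ⟨hik, hxk, hkc⟩ := Nat.find_spec hnext
  refine ⟨Nat.find hnext, hik, ?_, hxk, hkc, fun k' h1 h2 hk' => Nat.find_min hnext h2 ⟨h1, hk'⟩⟩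
  by_contra h
  rw [act_of_not_mem x (by omega)] at hkc
  have := act_le w hi hin
  omega

lemma exists_swap_of_rnk_le (hrnk : ∀ p q, p ≤ n → q ≤ n → rnk w p q ≤ rnk x p q)
    (hxw : x ≠ w) : ∃ P Q : Fin n, P < Q ∧ x P < x Q ∧
      ∀ p q, p ≤ n → q ≤ n → rnk w p q ≤ rnk (x * swap P Q) p q := by
  obtain ⟨i, hi, hin, hne, hagree⟩ := exists_first_difference hxw
  have hlt := act_lt_act_of_rnk_le hrnk hi hin hagree hne
  obtain ⟨k, hik, hkn, hxk, hkc, hmin⟩ := exists_next_value hi hin hagree hlt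
  set P : Fin n := ⟨i - 1, by omega⟩
  set Q : Fin n := ⟨k - 1, by omega⟩
  have hPi : (P : ℕ) + 1 = i := by simp only [P]; omega
  have hQk : (Q : ℕ) + 1 = k := by simp only [Q]; omega
  have hP : act x i = x P + 1 := hPi ▸ act_val_add_one x P
  have hQ : act x k = x Q + 1 := hQk ▸ act_val_add_one x Q
  have hPQ : P < Q := by rw [Fin.lt_def]; omega
  have hxPQ : x P < x Q := by rw [Fin.lt_def]; omega
  refine ⟨P, Q, hPQ, hxPQ, fun p q hp hq => ?_⟩
  have := rnk_mul_swap_add x hPQ hxPQ p q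
  split_ifs at this with hreg
  · have := rnk_add_one_le_of_first_difference (q := q) hrnk hi (by omega) hp hagree
      (by omega) (by omega) fun k' h1 h2 => hmin k' h1 (by omega)
    omega
  · have := hrnk p q hp hq
    omega

theorem bruhatLE_of_rnk_le (hrnk : ∀ p q, p ≤ n → q ≤ n → rnk w p q ≤ rnk x p q) :
    BruhatLE x w := by
  induction hN : rankSum x using Nat.strong_induction_on generalizing x with
  | _ N ih =>
    by_cases hxw : x = w
    · exact hxw ▸ .refl
    obtain ⟨P, Q, hPQ, hx, hrnk'⟩ := exists_swap_of_rnk_le hrnk hxw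
    exact .head (bruhatStep_mul_swap x hPQ hx)
      (ih _ (hN ▸ rankSum_mul_swap_lt x hPQ hx) hrnk' rfl)

end RankCriterion

/-- The values of the bigrassmannian permutation with unique right descent `i`, unique left
descent `j` and rank `r` at `(i, j)`: it fixes `1, …, r`, sends `r+1, …, i` to `j+1, …, i+j-r`
and `i+1, …, i+j-r` to `r+1, …, j`, and fixes the rest. -/
def blockFun (i j r p : ℕ) : ℕ :=
  if p ≤ r then p else if p ≤ i then p + j - r else if p ≤ i + j - r then p + r - i else p

def IsBlock (z : Perm (Fin n)) (i j r : ℕ) : Prop :=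
  r < i ∧ r < j ∧ i + j ≤ n + r ∧ ∀ p, 1 ≤ p → p ≤ n → act z p = blockFun i j r p

lemma blockFun_blockFun {i j r : ℕ} (hi : r ≤ i) (hj : r ≤ j) (p : ℕ) :
    blockFun i j r (blockFun j i r p) = p := by
  unfold blockFun; split_ifs <;> omega

lemma blockFun_min_eq (i j p : ℕ) : blockFun i j (min i j) p = p := by
  unfold blockFun; split_ifs <;> omega

namespace IsBlock

variable {z : Perm (Fin n)} {i j r : ℕ}

lemma inv (h : IsBlock z i j r) : IsBlock z⁻¹ j i r := by
  obtain ⟨hi, hj, hn, hz⟩ := h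
  refine ⟨hj, hi, by omega, fun p hp1 hpn => ?_⟩
  rw [eq_comm, ← act_eq_iff_eq_act_inv, hz _ (by unfold blockFun; split_ifs <;> omega)
    (by unfold blockFun; split_ifs <;> omega), blockFun_blockFun hi.le hj.le]

lemma ext {x : Perm (Fin n)} (hx : IsBlock x i j r) (hz : IsBlock z i j r) : x = z :=
  eq_of_act_eq fun p hp1 hpn => by rw [hx.2.2.2 p hp1 hpn, hz.2.2.2 p hp1 hpn]

lemma rnk_eq (h : IsBlock z i j r) {p : ℕ} (hp : p ≤ n) (q : ℕ) :
    rnk z p q = min (min p q) (r + (p - i) + (q - j)) := by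
  obtain ⟨hi, hj, hn, hz⟩ := h
  induction p with
  | zero => simp [rnk_zero_left]
  | succ p ih =>
    rw [rnk_succ_left, ih (by omega), hz _ (by omega) hp]
    unfold blockFun; split_ifs <;> omega

lemma rnk_self (h : IsBlock z i j r) : rnk z i j = r := by
  have ⟨hi, hj, hn, _⟩ := h
  rw [h.rnk_eq (by omega)]; omega

lemma isRightDescent_iff (h : IsBlock z i j r) (m : ℕ) : IsRightDescent z m ↔ m = i := by
  obtain ⟨hi, hj, hn, hz⟩ := h
  rw [Paper.isRightDescent_iff]
  constructor
  · rintro ⟨h1, h2, hlt⟩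
    rw [hz m h1 (by omega), hz (m + 1) (by omega) (by omega)] at hlt
    unfold blockFun at hlt; split_ifs at hlt <;> omega
  · rintro rfl
    refine ⟨by omega, by omega, ?_⟩
    rw [hz m (by omega) (by omega), hz (m + 1) (by omega) (by omega)]
    unfold blockFun; split_ifs <;> omega

lemma isLeftDescent_iff (h : IsBlock z i j r) (m : ℕ) : IsLeftDescent z m ↔ m = j := by
  rw [isLeftDescent_iff_isRightDescent_inv, h.inv.isRightDescent_iff]

lemma bigrassmannian (h : IsBlock z i j r) : Bigrassmannian z :=
  ⟨⟨j, (h.isLeftDescent_iff j).mpr rfl, fun m => (h.isLeftDescent_iff m).mp⟩,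
    ⟨i, (h.isRightDescent_iff i).mpr rfl, fun m => (h.isRightDescent_iff m).mp⟩⟩

theorem bruhatLE_iff (h : IsBlock z i j r) {w : Perm (Fin n)} : BruhatLE z w ↔ rnk w i j ≤ r := by
  refine ⟨fun hzw => h.rnk_self ▸ rnk_le_of_bruhatLE hzw i j, fun hw => ?_⟩
  refine bruhatLE_of_rnk_le fun p q hp _ => ?_
  rw [h.rnk_eq hp]
  have := rnk_le_rnk_add_left w p i q
  have := rnk_le_rnk_add_right w i q j
  have := rnk_le_left w p q
  have := rnk_le_right w p q
  omega

end IsBlock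

def NoDescentExcept (z : Perm (Fin n)) (i : ℕ) : Prop :=
  ∀ m, 1 ≤ m → m < n → m ≠ i → act z m < act z (m + 1)

section Classification

variable {z : Perm (Fin n)} {i j : ℕ}

lemma NoDescentExcept.strictMonoOn (hz : NoDescentExcept z i)
    {a b : ℕ} (ha : 1 ≤ a) (hb : b ≤ n) (hi : ¬(a ≤ i ∧ i < b)) :
    StrictMonoOn (act z) (Set.Icc a b) :=
  strictMonoOn_of_lt_add_one Set.ordConnected_Icc fun m _ hm hm1 =>
    hz m (ha.trans hm.1) (by have := hm1.2; omega) (by rintro rfl; exact hi ⟨hm.1, hm1.2⟩)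

lemma act_eq_blockFun_of_le (hz : NoDescentExcept z i) (hz' : NoDescentExcept z⁻¹ j)
    (hin : i ≤ n) (hjn : j ≤ n) {p : ℕ} (hp1 : 1 ≤ p) (hpi : p ≤ i) :
    act z p = blockFun i j (rnk z i j) p := by
  set r := rnk z i j
  have hri : r ≤ i := rnk_le_left z i j
  have hrj : r ≤ j := rnk_le_right z i j
  have hX : StrictMonoOn (act z) (Set.Icc 1 i) := hz.strictMonoOn le_rfl hin (by omega)
  have key : ∀ p, 1 ≤ p → p ≤ i → (act z p ≤ j ↔ p ≤ r) := fun p h1 h2 =>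
    hX.monotoneOn.apply_le_iff_le_card_filter h1 h2
  have hX1 := one_le_act z (le_refl 1)
  have low : ∀ p, 1 ≤ p → p ≤ r → act z p = p := by
    intro p h1 h2
    have hpj := (key p h1 (by omega)).mpr h2
    have hY : StrictMonoOn (act z⁻¹) (Set.Icc 1 j) :=
      hz'.strictMonoOn le_rfl hjn (by omega)
    have := hX.apply_add_sub_le h1 (by omega)
    have := hY.apply_add_sub_le (one_le_act z h1) hpj
    have := one_le_act z⁻¹ (le_refl 1)
    rw [act_inv_act] at *
    omega
  unfold blockFun
  split_ifs with h1
  · exact low p hp1 h1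
  · have hXp := act_le z hp1 (by omega)
    have hgt : j < act z p := not_le.mp fun h => h1 ((key p hp1 hpi).mp h)
    have hgt' : j < act z (r + 1) :=
      not_le.mp fun h => (Nat.not_succ_le_self r) ((key _ (by omega) (by omega)).mp h)
    have hY : StrictMonoOn (act z⁻¹) (Set.Icc (j + 1) n) :=
      hz'.strictMonoOn (by omega) le_rfl (by omega)
    have hYj : r < act z⁻¹ (j + 1) := by
      by_contra! h
      have := low _ (one_le_act z⁻¹ (by omega)) h
      rw [act_act_inv] at this
      omega
    have := (hX.mono (Set.Icc_subset_Icc_left (by omega))).apply_add_sub_le (a := r + 1)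
      (by omega) hpi
    have := hY.apply_add_sub_le hgt hXp
    rw [act_inv_act] at this
    omega

lemma act_inv_eq_blockFun_of_le (hz : NoDescentExcept z i) (hz' : NoDescentExcept z⁻¹ j)
    (hin : i ≤ n) (hjn : j ≤ n) {v : ℕ} (hv1 : 1 ≤ v) (hvj : v ≤ j) :
    act z⁻¹ v = blockFun j i (rnk z i j) v := by
  rw [← rnk_inv]
  exact act_eq_blockFun_of_le hz' (by simpa using hz) hjn hin hv1 hvj

lemma le_act_of_lt (hz : NoDescentExcept z i) (hz' : NoDescentExcept z⁻¹ j)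
    (hin : i ≤ n) (hjn : j ≤ n) {p : ℕ} (hp : i + j - rnk z i j < p) (hpn : p ≤ n) :
    p ≤ act z p := by
  set r := rnk z i j
  have hri : r ≤ i := rnk_le_left z i j
  have hrj : r ≤ j := rnk_le_right z i j
  -- `z` maps `1, …, i + j - r` onto itself, hence the positions beyond it to values beyond it
  have hbeyond : ∀ p', i + j - r < p' → p' ≤ n → i + j - r < act z p' := by
    intro p' hp' hp'n
    by_contra! hv
    have hv1 := one_le_act z (show 1 ≤ p' by omega)
    have hY := act_inv_act z p'
    by_cases hvj : act z p' ≤ j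
    · rw [act_inv_eq_blockFun_of_le hz hz' hin hjn hv1 hvj] at hY
      unfold blockFun at hY; split_ifs at hY <;> omega
    · have := act_eq_blockFun_of_le hz hz' hin hjn (p := act z p' + r - j) (by omega) (by omega)
      unfold blockFun at this
      rw [if_neg (by omega), if_pos (by omega), show act z p' + r - j + j - r = act z p' by omega,
        act_eq_iff_eq_act_inv, hY] at this
      omega
  have hX : StrictMonoOn (act z) (Set.Icc (i + j - r + 1) n) :=
    hz.strictMonoOn (by omega) le_rfl (by omega)
  have := hX.apply_add_sub_le (k := p) (by omega) hpn
  have := hbeyond (i + j - r + 1) (by omega) (by omega)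
  omega

theorem isBlock_of_descents (hz : NoDescentExcept z i) (hz' : NoDescentExcept z⁻¹ j)
    (hi : 1 ≤ i) (hin : i < n) (hjn : j ≤ n) (hdesc : act z (i + 1) < act z i) :
    IsBlock z i j (rnk z i j) := by
  set r := rnk z i j
  have hri : r ≤ i := rnk_le_left z i j
  have hrj : r ≤ j := rnk_le_right z i j
  have hrn := add_le_add_rnk z hin.le hjn
  have hz'' : NoDescentExcept z⁻¹⁻¹ i := by rwa [inv_inv]
  have hfun : ∀ p, 1 ≤ p → p ≤ n → act z p = blockFun i j r p := by
    intro p hp1 hpn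
    by_cases hpi : p ≤ i
    · exact act_eq_blockFun_of_le hz hz' hin.le hjn hp1 hpi
    by_cases hpm : p ≤ i + j - r
    · have := act_inv_eq_blockFun_of_le hz hz' hin.le hjn (v := p + r - i) (by omega) (by omega)
      unfold blockFun at this ⊢
      rw [if_neg (by omega), if_pos (by omega), show p + r - i + i - r = p by omega] at this
      rw [if_neg (by omega), if_neg hpi, if_pos hpm, act_eq_iff_eq_act_inv, this]
    · have hle := le_act_of_lt hz hz' hin.le hjn (by omega) hpn
      have hge := le_act_of_lt hz' hz'' hjn hin.le (p := act z p)
        (by rw [rnk_inv]; omega) (act_le z hp1 hpn)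
      rw [act_inv_act] at hge
      unfold blockFun
      rw [if_neg (by omega), if_neg hpi, if_neg hpm]
      omega
  refine ⟨?_, ?_, hrn, hfun⟩ <;> by_contra! hr <;>
  · have h1 := hfun i (by omega) hin.le
    have h2 := hfun (i + 1) (by omega) hin
    rw [show r = min i j by omega, blockFun_min_eq] at h1 h2
    omega

end Classification

theorem Bigrassmannian.isBlock {z : Perm (Fin n)} {i j : ℕ} (hz : Bigrassmannian z)
    (hR : IsRightDescent z i) (hL : IsLeftDescent z j) : IsBlock z i j (rnk z i j) := by
  have hasc : NoDescentExcept z i := fun m h1 h2 hmi => by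
    by_contra! hle
    have hlt := hle.lt_of_ne fun h => by have := act_injective z h; omega
    exact hmi (hz.2.unique ((isRightDescent_iff z m).mpr ⟨h1, by omega, hlt⟩) hR)
  have hasc' : NoDescentExcept z⁻¹ j := fun m h1 h2 hmj => by
    by_contra! hle
    have hlt := hle.lt_of_ne fun h => by have := act_injective z⁻¹ h; omega
    exact hmj (hz.1.unique ((isLeftDescent_iff z m).mpr ⟨h1, by omega, hlt⟩) hL)
  rw [isRightDescent_iff] at hR
  rw [isLeftDescent_iff] at hL
  exact isBlock_of_descents hasc hasc' hR.1 (by omega) (by omega) hR.2.2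

lemma ascRun_of_lt {a c : ℕ} (h : c < a) : ascRun n a c = 1 := by
  simp [ascRun, show c + 1 - a = 0 by omega]

lemma ascRun_eq_s_mul {a c : ℕ} (h : a ≤ c) : ascRun n a c = s n a * ascRun n (a + 1) c := by
  unfold ascRun
  rw [show c + 1 - a = c - a + 1 by omega, List.range_succ_eq_map, List.map_cons, List.prod_cons,
    List.map_map, show c + 1 - (a + 1) = c - a by omega, Nat.add_zero]
  congr 2
  exact List.map_congr_left fun t _ => by simp only [Function.comp_apply]; congr 1; omega

lemma act_ascRun {a c : ℕ} (ha : 1 ≤ a) (hac : a ≤ c) (hc : c < n) (p : ℕ) :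
    act (ascRun n a c) p = blockFun c a (a - 1) p := by
  induction h : c - a generalizing a p with
  | zero =>
    rw [ascRun_eq_s_mul hac, ascRun_of_lt (by omega), mul_one, act_s ha (by omega)]
    unfold blockFun; split_ifs <;> omega
  | succ d ih =>
    rw [ascRun_eq_s_mul hac, act_mul, ih (by omega) (by omega) _ (by omega), act_s ha (by omega)]
    unfold blockFun; split_ifs <;> omega

lemma bAux_succ (i j k : ℕ) :
    bAux n i j (k + 1) = bAux n i (j + 1) k * ascRun n (i - (k + 1)) j := by
  unfold bAux
  rw [List.range_succ, List.map_append, List.prod_append, List.map_singleton, List.prod_singleton,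
    show j + (k + 1) - (k + 1) = j by omega]
  congr 2
  exact List.map_congr_left fun t _ => by congr 1; omega

lemma act_bAux {i j k : ℕ} (hki : k < i) (hij : i ≤ j) (hj : j + k < n) (p : ℕ) :
    act (bAux n i j k) p = blockFun j i (i - (k + 1)) p := by
  induction k generalizing j p with
  | zero =>
    rw [show bAux n i j 0 = ascRun n i j by simp [bAux], act_ascRun (by omega) hij (by omega)]
  | succ k ih =>
    rw [bAux_succ, act_mul, act_ascRun (by omega) (by omega) (by omega),
      ih (by omega) (by omega) (by omega)]
    unfold blockFun; split_ifs <;> omega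

theorem isBlock_b {i j k : ℕ} (hki : k < i) (hkj : k < j) (hi : i + k < n) (hj : j + k < n) :
    IsBlock (b n j i k) i j (min i j - (k + 1)) := by
  unfold b
  split_ifs with hji
  · refine ⟨by omega, by omega, by omega, fun p _ _ => ?_⟩
    rw [act_bAux hkj hji hi, show min i j = j by omega]
  · refine IsBlock.inv ⟨by omega, by omega, by omega, fun p _ _ => ?_⟩
    rw [act_bAux hki (by omega) hj, show min i j = i by omega]

section EssentialSet

variable {w : Perm (Fin n)} {i j : ℕ}

lemma rnk_corners_of_mem_Ess (hij : (i, j) ∈ Ess w) :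
    rnk w (i - 1) j = rnk w i j ∧ rnk w i (j - 1) = rnk w i j ∧
      rnk w (i + 1) j = rnk w i j + 1 ∧ rnk w i (j + 1) = rnk w i j + 1 := by
  obtain ⟨hi, -, hj, -, hcol, hrow, hrow', hcol'⟩ := hij
  dsimp only at *
  have h1 := rnk_succ_left w (i - 1) j
  have h2 := rnk_succ_right w i (j - 1)
  rw [Nat.sub_add_cancel hi] at h1
  rw [Nat.sub_add_cancel hj] at h2
  rw [if_neg (by omega)] at h1 h2
  rw [rnk_succ_left, rnk_succ_right, if_pos hrow', if_pos hcol']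
  omega

lemma rnk_lt_of_mem_Ess (hij : (i, j) ∈ Ess w) : rnk w i j < i ∧ rnk w i j < j := by
  obtain ⟨h1, h2, -, -⟩ := rnk_corners_of_mem_Ess hij
  have := rnk_le_left w (i - 1) j
  have := rnk_le_right w i (j - 1)
  have := hij.1
  have := hij.2.2.1
  omega

lemma rnk_add_one_le_of_mem_Ess (hij : (i, j) ∈ Ess w) {p q : ℕ} (hne : (p, q) ≠ (i, j)) :
    rnk w i j + 1 ≤ rnk w p q + (i - p) + (j - q) := by
  obtain ⟨h1, h2, h3, h4⟩ := rnk_corners_of_mem_Ess hij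
  have := rnk_le_rnk_add_left w (i - 1) p q
  have := rnk_le_rnk_add_right w (i - 1) j q
  have := rnk_le_rnk_add_left w i p q
  have := rnk_le_rnk_add_right w i (j - 1) q
  have := hij.1
  have := hij.2.2.1
  rcases Nat.lt_or_ge p i with hp | hp
  · omega
  rcases Nat.lt_or_ge q j with hq | hq
  · omega
  rcases Nat.lt_or_ge i p with hp' | hp'
  · have := rnk_mono_left w q (show i + 1 ≤ p by omega)
    have := rnk_mono_right w (i + 1) hq
    omega
  · have hq' : j + 1 ≤ q := by
      by_contra
      exact hne (Prod.ext (by omega) (by omega))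
    have := rnk_mono_right w p hq'
    obtain rfl : p = i := by omega
    omega

lemma isBlock_b_cork (hij : (i, j) ∈ Ess w) :
    IsBlock (b n j i (cork w i j - 1)) i j (rnk w i j) := by
  obtain ⟨hri, hrj⟩ := rnk_lt_of_mem_Ess hij
  have := add_le_add_rnk w (p := i) (q := j) (by have := hij.2.1; omega)
    (by have := hij.2.2.2.1; omega)
  have hB := isBlock_b (n := n) (i := i) (j := j) (k := cork w i j - 1)
    (by unfold cork; omega) (by unfold cork; omega) (by unfold cork; omega) (by unfold cork; omega)
  rwa [show min i j - (cork w i j - 1 + 1) = rnk w i j by unfold cork; omega] at hB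

lemma mem_BSet_of_isBlock {B : Perm (Fin n)} (hB : IsBlock B i j (rnk w i j)) : B ∈ BSet w :=
  ⟨hB.bigrassmannian, hB.bruhatLE_iff.mpr le_rfl⟩

lemma mem_BM_of_isBlock (hij : (i, j) ∈ Ess w) {B : Perm (Fin n)}
    (hB : IsBlock B i j (rnk w i j)) : B ∈ BM w := by
  refine ⟨mem_BSet_of_isBlock hB, fun z ⟨hz, hzw⟩ hBz => ?_⟩
  obtain ⟨i', hi', -⟩ := hz.2
  obtain ⟨j', hj', -⟩ := hz.1
  have hzB := hz.isBlock hi' hj'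
  have hrnk_w := hzB.bruhatLE_iff.mp hzw
  have hrnk_z := hB.rnk_self ▸ rnk_le_of_bruhatLE hBz i j
  by_cases he : i' = i ∧ j' = j
  · obtain ⟨rfl, rfl⟩ := he
    exact hzB.ext (by rwa [show rnk z i' j' = rnk w i' j' by omega])
  · have := rnk_add_one_le_of_mem_Ess hij fun h => he (Prod.ext_iff.mp h)
    have := rnk_lt_of_mem_Ess hij
    have := hij.2.1
    rw [hzB.rnk_eq (p := i) (by omega)] at hrnk_z
    omega

lemma eq_of_mem_BM {B x : Perm (Fin n)} (hB : IsBlock B i j (rnk w i j)) (hx : x ∈ BM w)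
    (hR : IsRightDescent x i) (hL : IsLeftDescent x j) : x = B := by
  have hxB := hx.1.1.isBlock hR hL
  have hxw := hxB.bruhatLE_iff.mp hx.1.2
  exact (hx.2 B (mem_BSet_of_isBlock hB) (hxB.bruhatLE_iff.mpr (hB.rnk_self.trans_le hxw))).symm

end EssentialSet

theorem stmt10 (n : ℕ) (w : Equiv.Perm (Fin n)) (i j : ℕ)
    (hij : (i, j) ∈ Ess w) :
    (∃! x : Equiv.Perm (Fin n),
        x ∈ BM w ∧ IsRightDescent x i ∧ IsLeftDescent x j) ∧
    (∀ x ∈ BM w, IsRightDescent x i → IsLeftDescent x j →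
        x = b n j i (cork w i j - 1)) := by
  have hB := isBlock_b_cork hij
  have huniq : ∀ x ∈ BM w, IsRightDescent x i → IsLeftDescent x j →
      x = b n j i (cork w i j - 1) := fun x hx hR hL => eq_of_mem_BM hB hx hR hL
  refine ⟨⟨_, ⟨mem_BM_of_isBlock hij hB, (hB.isRightDescent_iff i).mpr rfl,
    (hB.isLeftDescent_iff j).mpr rfl⟩, fun x hx => huniq x hx.1 hx.2.1 hx.2.2⟩, huniq⟩

end Paper
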